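/- arXiv:2304.12779 — 2 statements merged into one kernel-verified Lean document; each statement's English description precedes it below -/
import Mathlib

section
/- Consider a 5-path-center configuration in a finite simple graph G with |A2| = 1 and |A1| = 2. Then G contains a collection of vertex-disjoint paths, each of order at least 4, covering at least 10 vertices in total. -/
open SimpleGraph

/-- Degree of a vertex in a subgraph, via `Set.ncard` of the neighbor set. -/
noncomputable def subDeg {V : Type*} {G : SimpleGraph V} (H : G.Subgraph) (v : V) : ℕ :=
  (H.neighborSet v).ncard

/-- A subgraph is a path: it is a single vertex, or it is connected with exactly two
vertices of degree 1 and all other vertices of degree 2. -/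
def IsPathSubgraph {V : Type*} {G : SimpleGraph V} (P : G.Subgraph) : Prop :=
  P.Connected ∧
  ((∃ v, P.verts = {v}) ∨
    (({v ∈ P.verts | subDeg P v = 1}).ncard = 2 ∧
      ∀ v ∈ P.verts, subDeg P v = 1 ∨ subDeg P v = 2))

/-- `x` is an endpoint of the path subgraph `P` (for paths of order at least 2). -/
def IsPathEndpoint {V : Type*} {G : SimpleGraph V} (P : G.Subgraph) (x : V) : Prop :=
  x ∈ P.verts ∧ subDeg P x = 1

/-- A matching of `G`: a finite set of edges of `G`, no two of which share an endpoint. -/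
def IsMatchingSet {V : Type*} (G : SimpleGraph V) (M : Finset (Sym2 V)) : Prop :=
  ↑M ⊆ G.edgeSet ∧ ∀ e ∈ M, ∀ f ∈ M, e ≠ f → ∀ v : V, v ∈ e → v ∉ f

/-- A maximum matching of `G`. -/
def IsMaxMatchingSet {V : Type*} (G : SimpleGraph V) (M : Finset (Sym2 V)) : Prop :=
  IsMatchingSet G M ∧ ∀ M' : Finset (Sym2 V), IsMatchingSet G M' → M'.card ≤ M.card

/-- There is a collection of vertex-disjoint path subgraphs of `G`, each of order at
least 4, whose total number of vertices `n` satisfies `p n`. -/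
def HasDisjointPathsCovering {V : Type*} (G : SimpleGraph V) (p : ℕ → Prop) : Prop :=
  ∃ Ps : Set G.Subgraph,
    (∀ P ∈ Ps, IsPathSubgraph P ∧ 4 ≤ P.verts.ncard) ∧
    (Ps.Pairwise fun P Q => Disjoint P.verts Q.verts) ∧
    p ((⋃ P ∈ Ps, P.verts).ncard)

/-- There is a collection of vertex-disjoint path subgraphs of `G`, each of order at
least 4, covering at least `N` vertices in total. -/
def HasDisjointPathCover {V : Type*} (G : SimpleGraph V) (N : ℕ) : Prop :=
  HasDisjointPathsCovering G fun n => N ≤ n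

/-- `opt G`: the maximum total number of vertices in a collection of vertex-disjoint
paths of `G`, each of order at least 4. -/
noncomputable def optValue {V : Type*} (G : SimpleGraph V) : ℕ :=
  sSup {n : ℕ |
    ∃ Ps : Set G.Subgraph,
      (∀ P ∈ Ps, IsPathSubgraph P ∧ 4 ≤ P.verts.ncard) ∧
      (Ps.Pairwise fun P Q => Disjoint P.verts Q.verts) ∧
      n = (⋃ P ∈ Ps, P.verts).ncard}

/-- Degree of a vertex in the spanning subgraph determined by an edge set `F`. -/
noncomputable def edgeDeg {W : Type*} (F : Set (Sym2 W)) (v : W) : ℕ :=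
  {e ∈ F | v ∈ e}.ncard

/-- An edge set `C` saturates a vertex set `B` if some edge of `C` has an endpoint in `B`. -/
def Saturates {W : Type*} (C : Set (Sym2 W)) (B : Set W) : Prop :=
  ∃ e ∈ C, ∃ v ∈ B, v ∈ e

/-- A 5-path-center configuration in `G`: a path `v 0 – v 1 – v 2 – v 3 – v 4` in `G`
(indices `0,…,4` correspond to `v1,…,v5`), disjoint index sets `A1` (1-anchors) and
`A2` (2-anchors), pairwise disjoint sets `U i` avoiding the `v i`'s, for each
`i ∈ A1 ∪ A2` a path `Q i` of order at least 3 with endpoint `v i` and all other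
vertices in `U i`, and for each `i ∈ A2` additionally a path `P i` of order at least 5
with `v i ∈ V(P i) ⊆ {v i} ∪ U i`. -/
structure FivePathConfig {V : Type*} (G : SimpleGraph V) where
  v : Fin 5 → V
  inj : Function.Injective v
  adj : ∀ i : Fin 4, G.Adj (v i.castSucc) (v i.succ)
  A1 : Finset (Fin 5)
  A2 : Finset (Fin 5)
  hA : Disjoint A1 A2
  U : Fin 5 → Set V
  hUv : ∀ i ∈ A1 ∪ A2, Disjoint (U i) (Set.range v)
  hUdisj : ∀ i ∈ A1 ∪ A2, ∀ j ∈ A1 ∪ A2, i ≠ j → Disjoint (U i) (U j)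
  Q : Fin 5 → G.Subgraph
  hQpath : ∀ i ∈ A1 ∪ A2, IsPathSubgraph (Q i)
  hQcard : ∀ i ∈ A1 ∪ A2, 3 ≤ (Q i).verts.ncard
  hQend : ∀ i ∈ A1 ∪ A2, IsPathEndpoint (Q i) (v i)
  hQverts : ∀ i ∈ A1 ∪ A2, (Q i).verts ⊆ insert (v i) (U i)
  P : Fin 5 → G.Subgraph
  hPpath : ∀ i ∈ A2, IsPathSubgraph (P i)
  hPcard : ∀ i ∈ A2, 5 ≤ (P i).verts.ncard
  hPv : ∀ i ∈ A2, v i ∈ (P i).verts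
  hPverts : ∀ i ∈ A2, (P i).verts ⊆ insert (v i) (U i)

/-!
The three anchors each carry a path Qi of order at least 3 ending at vi. If two anchors are
consecutive on the centre path, joining their Q-paths by the centre edge gives a path of order at
least 6, while the third anchor has a non-anchor neighbour on the centre path that extends its
Q-path to order at least 4. Otherwise the anchors are v1, v3, v5, and Q1 – v2 – Q3 and Q5 – v4
are paths of orders at least 7 and 4. Everything rests on one fact: two vertex-disjoint paths
joined by an edge between an end of each form a path.
-/

section Join

variable {V : Type*} {G : SimpleGraph V} {P Q R : G.Subgraph} {x y w : V}

def IsPathTip (P : G.Subgraph) (x : V) : Prop :=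
  x ∈ P.verts ∧ (P.verts = {x} ∨ subDeg P x = 1)

lemma IsPathEndpoint.isPathTip (h : IsPathEndpoint P x) : IsPathTip P x :=
  ⟨h.1, Or.inr h.2⟩

lemma isPathSubgraph_singletonSubgraph (v : V) : IsPathSubgraph (G.singletonSubgraph v) :=
  ⟨Subgraph.singletonSubgraph_connected, Or.inl ⟨v, rfl⟩⟩

lemma isPathTip_singletonSubgraph (v : V) : IsPathTip (G.singletonSubgraph v) v :=
  ⟨rfl, Or.inl rfl⟩

lemma neighborSet_eq_empty_of_notMem (h : w ∉ P.verts) : P.neighborSet w = ∅ :=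
  Set.eq_empty_of_forall_notMem fun _ hu => h hu.fst_mem

lemma neighborSet_eq_empty_of_verts_eq_singleton (h : P.verts = {x}) : P.neighborSet x = ∅ :=
  Set.eq_empty_of_forall_notMem fun _ hu =>
    (P.adj_sub hu).ne (Set.mem_singleton_iff.mp (h ▸ hu.snd_mem)).symm

lemma IsPathTip.finite_neighborSet (hx : IsPathTip P x) : (P.neighborSet x).Finite := by
  rcases hx.2 with h | h
  · simp [neighborSet_eq_empty_of_verts_eq_singleton h]
  · exact Set.finite_of_ncard_pos (by unfold subDeg at h; omega)

lemma IsPathSubgraph.exists_ends_eq_pair_of_subDeg_eq_one (hP : IsPathSubgraph P)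
    (hx : x ∈ P.verts) (hdx : subDeg P x = 1) :
    ∃ a ≠ x, {w ∈ P.verts | subDeg P w = 1} = {x, a} ∧
      ∀ w ∈ P.verts, subDeg P w = 1 ∨ subDeg P w = 2 := by
  rcases hP.2 with ⟨v, hv⟩ | ⟨hcard, hdeg⟩
  · obtain rfl : x = v := by rwa [hv, Set.mem_singleton_iff] at hx
    simp [subDeg, neighborSet_eq_empty_of_verts_eq_singleton hv] at hdx
  · obtain ⟨a, b, hab, hends⟩ := Set.ncard_eq_two.mp hcard
    have hx_end : x ∈ ({a, b} : Set V) := hends ▸ ⟨hx, hdx⟩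
    rcases hx_end with rfl | rfl
    · exact ⟨b, hab.symm, hends, hdeg⟩
    · exact ⟨a, hab, hends.trans (Set.pair_comm _ _), hdeg⟩

lemma IsPathSubgraph.exists_far_end (hP : IsPathSubgraph P) (hx : IsPathTip P x)
    (hkeep : ∀ w ∈ P.verts, w ≠ x → subDeg R w = subDeg P w)
    (hdegx : subDeg R x = subDeg P x + 1) :
    ∃ a ∈ P.verts, ∀ w ∈ P.verts, (subDeg R w = 1 ↔ w = a) ∧ (subDeg R w = 1 ∨ subDeg R w = 2) := by
  rcases hx with ⟨hxP, hsingle | hdx⟩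
  · have hdx : subDeg R x = 1 := by
      rw [hdegx, subDeg, neighborSet_eq_empty_of_verts_eq_singleton hsingle, Set.ncard_empty]
    refine ⟨x, hxP, fun w hw => ?_⟩
    obtain rfl : w = x := by rwa [hsingle, Set.mem_singleton_iff] at hw
    simp [hdx]
  · obtain ⟨a, hax, hends, hdeg⟩ := hP.exists_ends_eq_pair_of_subDeg_eq_one hxP hdx
    have ha_end : a ∈ {w ∈ P.verts | subDeg P w = 1} := hends ▸ Set.mem_insert_of_mem x rfl
    refine ⟨a, ha_end.1, fun w hw => ?_⟩
    by_cases hwx : w = x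
    · subst hwx
      simp [hdegx, hdx, Ne.symm hax]
    · have hw_end : subDeg P w = 1 ↔ w = a := by
        have h := Set.ext_iff.mp hends w
        simp only [Set.mem_ofPred_eq, Set.mem_insert_iff, Set.mem_singleton_iff, hwx,
          false_or] at h
        exact ⟨fun hd => h.mp ⟨hw, hd⟩, fun hwa => (h.mpr hwa).2⟩
      rw [hkeep w hw hwx]
      exact ⟨hw_end, hdeg w hw⟩

def joinAlong (P Q : G.Subgraph) (hxy : G.Adj x y) : G.Subgraph :=
  P ⊔ G.subgraphOfAdj hxy ⊔ Q

variable (hxy : G.Adj x y)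

lemma joinAlong_comm : joinAlong P Q hxy = joinAlong Q P hxy.symm := by
  rw [joinAlong, joinAlong, subgraphOfAdj_symm hxy]
  ac_rfl

lemma verts_joinAlong (hx : x ∈ P.verts) (hy : y ∈ Q.verts) :
    (joinAlong P Q hxy).verts = P.verts ∪ Q.verts := by
  ext w
  simp only [joinAlong, Subgraph.verts_sup, subgraphOfAdj_verts, Set.mem_union,
    Set.mem_insert_iff, Set.mem_singleton_iff]
  constructor
  · rintro ((h | rfl | rfl) | h) <;> simp [*]
  · rintro (h | h) <;> simp [h]

lemma neighborSet_joinAlong (w : V) : (joinAlong P Q hxy).neighborSet w =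
    P.neighborSet w ∪ (G.subgraphOfAdj hxy).neighborSet w ∪ Q.neighborSet w := by
  rw [joinAlong, Subgraph.neighborSet_sup, Subgraph.neighborSet_sup]

lemma subDeg_joinAlong_of_mem_left (hdisj : Disjoint P.verts Q.verts) (hy : y ∈ Q.verts)
    (hw : w ∈ P.verts) (hwx : w ≠ x) : subDeg (joinAlong P Q hxy) w = subDeg P w := by
  have hwy : w ≠ y := fun h => Set.disjoint_left.mp hdisj hw (h ▸ hy)
  rw [subDeg, neighborSet_joinAlong, neighborSet_subgraphOfAdj_of_ne_of_ne hxy hwx hwy,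
    neighborSet_eq_empty_of_notMem (Set.disjoint_left.mp hdisj hw), Set.union_empty,
    Set.union_empty, subDeg]

lemma subDeg_joinAlong_left (hdisj : Disjoint P.verts Q.verts) (hx : IsPathTip P x)
    (hy : y ∈ Q.verts) : subDeg (joinAlong P Q hxy) x = subDeg P x + 1 := by
  have hyP : y ∉ P.verts := Set.disjoint_right.mp hdisj hy
  rw [subDeg, neighborSet_joinAlong, neighborSet_fst_subgraphOfAdj,
    neighborSet_eq_empty_of_notMem (Set.disjoint_left.mp hdisj hx.1), Set.union_empty,
    Set.union_singleton, Set.ncard_insert_of_notMem (fun h => hyP h.snd_mem) hx.finite_neighborSet,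
    subDeg]

lemma subDeg_joinAlong_of_mem_right (hdisj : Disjoint P.verts Q.verts) (hx : x ∈ P.verts)
    (hw : w ∈ Q.verts) (hwy : w ≠ y) : subDeg (joinAlong P Q hxy) w = subDeg Q w := by
  rw [joinAlong_comm]
  exact subDeg_joinAlong_of_mem_left hxy.symm hdisj.symm hx hw hwy

lemma subDeg_joinAlong_right (hdisj : Disjoint P.verts Q.verts) (hx : x ∈ P.verts)
    (hy : IsPathTip Q y) : subDeg (joinAlong P Q hxy) y = subDeg Q y + 1 := by
  rw [joinAlong_comm]
  exact subDeg_joinAlong_left hxy.symm hdisj.symm hy hx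

lemma connected_joinAlong (hP : P.Connected) (hQ : Q.Connected) (hx : x ∈ P.verts)
    (hy : y ∈ Q.verts) : (joinAlong P Q hxy).Connected := by
  have hPE : (P ⊔ G.subgraphOfAdj hxy).Connected :=
    Subgraph.connected_sup hP.preconnected (Subgraph.subgraphOfAdj_connected hxy).preconnected
      ⟨x, hx, by simp⟩
  exact Subgraph.connected_sup hPE.preconnected hQ.preconnected ⟨y, Or.inr (by simp), hy⟩

lemma isPathSubgraph_joinAlong (hP : IsPathSubgraph P) (hQ : IsPathSubgraph Q)
    (hdisj : Disjoint P.verts Q.verts) (hx : IsPathTip P x) (hy : IsPathTip Q y) :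
    IsPathSubgraph (joinAlong P Q hxy) := by
  obtain ⟨a, haP, ha⟩ := hP.exists_far_end hx
    (fun w hw hwx => subDeg_joinAlong_of_mem_left hxy hdisj hy.1 hw hwx)
    (subDeg_joinAlong_left hxy hdisj hx hy.1)
  obtain ⟨b, hbQ, hb⟩ := hQ.exists_far_end hy
    (fun w hw hwy => subDeg_joinAlong_of_mem_right hxy hdisj hx.1 hw hwy)
    (subDeg_joinAlong_right hxy hdisj hx.1 hy)
  have hverts := verts_joinAlong hxy (Q := Q) hx.1 hy.1
  have hab : a ≠ b := fun h => Set.disjoint_left.mp hdisj haP (h ▸ hbQ)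
  have hends : {w ∈ (joinAlong P Q hxy).verts | subDeg (joinAlong P Q hxy) w = 1} = {a, b} := by
    ext w
    rw [hverts]
    constructor
    · rintro ⟨hw | hw, hdw⟩
      exacts [Or.inl (((ha w hw).1).mp hdw), Or.inr (((hb w hw).1).mp hdw)]
    · rintro (rfl | rfl)
      exacts [⟨Or.inl haP, ((ha w haP).1).mpr rfl⟩, ⟨Or.inr hbQ, ((hb w hbQ).1).mpr rfl⟩]
  refine ⟨connected_joinAlong hxy hP.1 hQ.1 hx.1 hy.1, Or.inr ⟨hends ▸ Set.ncard_pair hab, ?_⟩⟩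
  rw [hverts]
  rintro w (hw | hw)
  exacts [(ha w hw).2, (hb w hw).2]

lemma isPathTip_joinAlong_singletonSubgraph (hx : x ∈ P.verts) (hyP : y ∉ P.verts) :
    IsPathTip (joinAlong P (G.singletonSubgraph y) hxy) y := by
  have hdisj : Disjoint P.verts (G.singletonSubgraph y).verts := by simpa using hyP
  have htip := isPathTip_singletonSubgraph (G := G) y
  refine ⟨verts_joinAlong hxy hx htip.1 ▸ Or.inr htip.1, Or.inr ?_⟩
  rw [subDeg_joinAlong_right hxy hdisj hx htip, subDeg,
    neighborSet_eq_empty_of_verts_eq_singleton rfl, Set.ncard_empty]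

lemma ncard_verts_joinAlong (hdisj : Disjoint P.verts Q.verts) (hx : x ∈ P.verts)
    (hy : y ∈ Q.verts) (hPfin : P.verts.Finite) (hQfin : Q.verts.Finite) :
    (joinAlong P Q hxy).verts.ncard = P.verts.ncard + Q.verts.ncard := by
  rw [verts_joinAlong hxy hx hy, Set.ncard_union_eq hdisj hPfin hQfin]

end Join

lemma hasDisjointPathCover_of_disjoint {V : Type*} {G : SimpleGraph V} {R₁ R₂ : G.Subgraph}
    {N : ℕ} (hR₁ : IsPathSubgraph R₁) (hR₂ : IsPathSubgraph R₂) (h₁ : 4 ≤ R₁.verts.ncard)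
    (h₂ : 4 ≤ R₂.verts.ncard) (hdisj : Disjoint R₁.verts R₂.verts)
    (hN : N ≤ R₁.verts.ncard + R₂.verts.ncard) : HasDisjointPathCover G N := by
  refine ⟨{R₁, R₂}, ?_, ?_, ?_⟩
  · rintro P (rfl | rfl)
    exacts [⟨hR₁, h₁⟩, ⟨hR₂, h₂⟩]
  · rintro P (rfl | rfl) P' (rfl | rfl) hne
    exacts [(hne rfl).elim, hdisj, hdisj.symm, (hne rfl).elim]
  · show N ≤ _
    rwa [Set.biUnion_pair, Set.ncard_union_eq hdisj (Set.finite_of_ncard_pos (by omega))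
      (Set.finite_of_ncard_pos (by omega))]

namespace FivePathConfig

variable {V : Type*} {G : SimpleGraph V} (cfg : FivePathConfig G)

def part (i : Fin 5) : Set V :=
  if i ∈ cfg.A1 ∪ cfg.A2 then insert (cfg.v i) (cfg.U i) else {cfg.v i}

def span (I : Finset (Fin 5)) : Set V :=
  ⋃ i ∈ I, cfg.part i

lemma mem_part {i : Fin 5} {a : V} :
    a ∈ cfg.part i ↔ a = cfg.v i ∨ (i ∈ cfg.A1 ∪ cfg.A2 ∧ a ∈ cfg.U i) := by
  unfold part
  split_ifs with hi <;> simp [hi]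

lemma disjoint_part {i j : Fin 5} (hij : i ≠ j) : Disjoint (cfg.part i) (cfg.part j) := by
  rw [Set.disjoint_left]
  intro a hai haj
  rw [mem_part] at hai haj
  rcases hai with rfl | ⟨hi, hai⟩ <;> rcases haj with h | ⟨hj, haj⟩
  · exact hij (cfg.inj h)
  · exact Set.disjoint_left.mp (cfg.hUv j hj) haj ⟨i, rfl⟩
  · exact Set.disjoint_left.mp (cfg.hUv i hi) hai ⟨j, h.symm⟩
  · exact Set.disjoint_left.mp (cfg.hUdisj i hi j hj hij) hai haj

lemma disjoint_span {I J : Finset (Fin 5)} (hIJ : Disjoint I J) :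
    Disjoint (cfg.span I) (cfg.span J) := by
  simp only [span, Set.disjoint_iUnion₂_left, Set.disjoint_iUnion₂_right]
  exact fun i hi j hj => cfg.disjoint_part fun hij => by
    subst hij
    exact Finset.disjoint_left.mp hIJ hj hi

lemma part_subset_span {I : Finset (Fin 5)} {i : Fin 5} (hi : i ∈ I) :
    cfg.part i ⊆ cfg.span I :=
  Set.subset_biUnion_of_mem (u := cfg.part) (Finset.mem_coe.mpr hi)

lemma Q_verts_subset_span {i : Fin 5} (hi : i ∈ cfg.A1 ∪ cfg.A2) :
    (cfg.Q i).verts ⊆ cfg.span {i} := by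
  refine subset_trans ?_ (cfg.part_subset_span (Finset.mem_singleton_self i))
  rw [part, if_pos hi]
  exact cfg.hQverts i hi

lemma singletonSubgraph_verts_subset_span (i : Fin 5) :
    (G.singletonSubgraph (cfg.v i)).verts ⊆ cfg.span {i} := by
  refine subset_trans ?_ (cfg.part_subset_span (Finset.mem_singleton_self i))
  simp [mem_part]

lemma Q_verts_finite {i : Fin 5} (hi : i ∈ cfg.A1 ∪ cfg.A2) : (cfg.Q i).verts.Finite :=
  Set.finite_of_ncard_pos (by have := cfg.hQcard i hi; omega)

lemma adj_of_pathGraph_adj {i j : Fin 5} (h : (pathGraph 5).Adj i j) :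
    G.Adj (cfg.v i) (cfg.v j) := by
  rcases pathGraph_adj.mp h with h | h
  · convert cfg.adj ⟨i, by omega⟩ using 2 <;> ext <;> simp [h]
  · convert (cfg.adj ⟨j, by omega⟩).symm using 2 <;> ext <;> simp [h]

variable {I J : Finset (Fin 5)} {P Q : G.Subgraph} {x y : V} (hxy : G.Adj x y)

lemma joinAlong_span (hIJ : Disjoint I J) (hP : IsPathSubgraph P) (hQ : IsPathSubgraph Q)
    (hPI : P.verts ⊆ cfg.span I) (hQJ : Q.verts ⊆ cfg.span J) (hx : IsPathTip P x)
    (hy : IsPathTip Q y) (hPfin : P.verts.Finite) (hQfin : Q.verts.Finite) :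
    IsPathSubgraph (joinAlong P Q hxy) ∧ (joinAlong P Q hxy).verts ⊆ cfg.span (I ∪ J) ∧
      (joinAlong P Q hxy).verts.ncard = P.verts.ncard + Q.verts.ncard := by
  have hdisj : Disjoint P.verts Q.verts := (cfg.disjoint_span hIJ).mono hPI hQJ
  refine ⟨isPathSubgraph_joinAlong hxy hP hQ hdisj hx hy, ?_,
    ncard_verts_joinAlong hxy hdisj hx.1 hy.1 hPfin hQfin⟩
  rw [verts_joinAlong hxy hx.1 hy.1, span, Finset.set_biUnion_union]
  exact Set.union_subset_union hPI hQJ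

lemma joinAlong_Q_singletonSubgraph {i j : Fin 5} (hi : i ∈ cfg.A1 ∪ cfg.A2)
    (hij : (pathGraph 5).Adj i j) :
    let R := joinAlong (cfg.Q i) (G.singletonSubgraph (cfg.v j)) (cfg.adj_of_pathGraph_adj hij)
    IsPathSubgraph R ∧ R.verts ⊆ cfg.span ({i} ∪ {j}) ∧ R.verts.ncard = (cfg.Q i).verts.ncard + 1 ∧
      IsPathTip R (cfg.v j) := by
  obtain ⟨hR, hRspan, hRcard⟩ := cfg.joinAlong_span (cfg.adj_of_pathGraph_adj hij)
    (Finset.disjoint_singleton.mpr hij.ne) (cfg.hQpath i hi) (isPathSubgraph_singletonSubgraph _)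
    (cfg.Q_verts_subset_span hi) (cfg.singletonSubgraph_verts_subset_span j)
    (cfg.hQend i hi).isPathTip (isPathTip_singletonSubgraph _) (cfg.Q_verts_finite hi)
    (Set.finite_singleton _)
  have hvj : cfg.v j ∉ (cfg.Q i).verts := fun h =>
    Set.disjoint_left.mp ((cfg.disjoint_span (Finset.disjoint_singleton.mpr hij.ne)).mono_left
      (cfg.Q_verts_subset_span hi)) h (cfg.singletonSubgraph_verts_subset_span j rfl)
  refine ⟨hR, hRspan, by simpa using hRcard, ?_⟩
  exact isPathTip_joinAlong_singletonSubgraph _ (cfg.hQend i hi).1 hvj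

lemma hasDisjointPathCover_of_adj_anchors {x y z m : Fin 5} (hx : x ∈ cfg.A1 ∪ cfg.A2)
    (hy : y ∈ cfg.A1 ∪ cfg.A2) (hz : z ∈ cfg.A1 ∪ cfg.A2) (hm : m ∉ cfg.A1 ∪ cfg.A2)
    (hzx : z ≠ x) (hzy : z ≠ y) (hxy : (pathGraph 5).Adj x y) (hzm : (pathGraph 5).Adj z m) :
    HasDisjointPathCover G 10 := by
  obtain ⟨hR₁, hR₁span, hR₁card⟩ := cfg.joinAlong_span (cfg.adj_of_pathGraph_adj hxy)
    (Finset.disjoint_singleton.mpr hxy.ne) (cfg.hQpath x hx) (cfg.hQpath y hy)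
    (cfg.Q_verts_subset_span hx) (cfg.Q_verts_subset_span hy) (cfg.hQend x hx).isPathTip
    (cfg.hQend y hy).isPathTip (cfg.Q_verts_finite hx) (cfg.Q_verts_finite hy)
  obtain ⟨hR₂, hR₂span, hR₂card, -⟩ := cfg.joinAlong_Q_singletonSubgraph hz hzm
  have hspan : Disjoint ({x} ∪ {y} : Finset (Fin 5)) ({z} ∪ {m}) := by
    simp only [Finset.disjoint_union_left, Finset.disjoint_union_right, Finset.disjoint_singleton]
    exact ⟨⟨hzx.symm, hzy.symm⟩, fun h => hm (h ▸ hx), fun h => hm (h ▸ hy)⟩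
  have := cfg.hQcard x hx; have := cfg.hQcard y hy; have := cfg.hQcard z hz
  exact hasDisjointPathCover_of_disjoint hR₁ hR₂ (by omega) (by omega)
    ((cfg.disjoint_span hspan).mono hR₁span hR₂span) (by omega)

lemma hasDisjointPathCover_of_zero_two_four (h₀ : 0 ∈ cfg.A1 ∪ cfg.A2)
    (h₂ : 2 ∈ cfg.A1 ∪ cfg.A2) (h₄ : 4 ∈ cfg.A1 ∪ cfg.A2) : HasDisjointPathCover G 10 := by
  have adj : ∀ i j : Fin 5, i.val + 1 = j.val → (pathGraph 5).Adj i j :=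
    fun i j h => pathGraph_adj.mpr (Or.inl h)
  obtain ⟨hR, hRspan, hRcard, hRtip⟩ := cfg.joinAlong_Q_singletonSubgraph h₀ (adj 0 1 rfl)
  obtain ⟨hR₁, hR₁span, hR₁card⟩ := cfg.joinAlong_span (cfg.adj_of_pathGraph_adj (adj 1 2 rfl))
    (by decide) hR (cfg.hQpath 2 h₂) hRspan (cfg.Q_verts_subset_span h₂) hRtip
    (cfg.hQend 2 h₂).isPathTip (Set.finite_of_ncard_pos (by omega)) (cfg.Q_verts_finite h₂)
  obtain ⟨hR₂, hR₂span, hR₂card, -⟩ := cfg.joinAlong_Q_singletonSubgraph h₄ (adj 3 4 rfl).symm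
  have := cfg.hQcard 0 h₀; have := cfg.hQcard 2 h₂; have := cfg.hQcard 4 h₄
  exact hasDisjointPathCover_of_disjoint hR₁ hR₂ (by omega) (by omega)
    ((cfg.disjoint_span (by decide)).mono hR₁span hR₂span) (by omega)

end FivePathConfig

lemma card_eq_three_fin_five_cases (S : Finset (Fin 5)) (hS : S.card = 3) :
    S = {0, 2, 4} ∨ ∃ x ∈ S, ∃ y ∈ S, ∃ z ∈ S, ∃ m ∉ S,
      z ≠ x ∧ z ≠ y ∧ (pathGraph 5).Adj x y ∧ (pathGraph 5).Adj z m := by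
  simp only [pathGraph_adj]
  revert S
  decide

theorem stmt14_general {V : Type*} (G : SimpleGraph V)
    (cfg : FivePathConfig G) (h2 : cfg.A2.card = 1) (h1 : cfg.A1.card = 2) :
    HasDisjointPathCover G 10 := by
  have hanchors : (cfg.A1 ∪ cfg.A2).card = 3 := by
    rw [Finset.card_union_of_disjoint cfg.hA, h1, h2]
  rcases card_eq_three_fin_five_cases _ hanchors with
    h024 | ⟨x, hx, y, hy, z, hz, m, hm, hzx, hzy, hxy, hzm⟩
  · exact cfg.hasDisjointPathCover_of_zero_two_four (by simp [h024]) (by simp [h024])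
      (by simp [h024])
  · exact cfg.hasDisjointPathCover_of_adj_anchors hx hy hz hm hzx hzy hxy hzm

/-- a 5-path-center configuration with `|A2| = 1` and `|A1| = 2` yields
vertex-disjoint `4⁺`-paths covering at least 10 vertices. -/
theorem stmt14 {V : Type*} [Fintype V] [DecidableEq V] (G : SimpleGraph V)
    (cfg : FivePathConfig G) (h2 : cfg.A2.card = 1) (h1 : cfg.A1.card = 2) :
    HasDisjointPathCover G 10 :=
  stmt14_general G cfg h2 h1
end

section
/- Consider a 5-path-center configuration in a finite simple graph G with A2 = {i} and A1 = {j}, where i ≠ j. Then G contains a collection of vertex-disjoint paths, each of order at least 4, covering at least 7 vertices in total; and if moreover (i,j) ∉ {(2,1), (4,5)}, then G contains such a collection covering at least 9 vertices in total. -/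
open SimpleGraph

/-!
If `v j` has a neighbour `v k ≠ v i` on the 5-path, then `Q j` followed by `v k` is a path of
order at least 4 that is disjoint from `P i`, so together they cover at least 4 + 5 = 9 vertices.
Otherwise `v j` is an end of the 5-path and `v i` its only neighbour there, and `Q j` continued
along the whole 5-path is a single path of order at least 3 + 4 = 7.
-/

section PathExtension

variable {V : Type*} {G : SimpleGraph V} {Q : G.Subgraph} {x w : V}

lemma verts_sup_subgraphOfAdj (hx : x ∈ Q.verts) (hadj : G.Adj x w) :
    (Q ⊔ G.subgraphOfAdj hadj).verts = insert w Q.verts := by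
  ext u
  simp only [Subgraph.verts_sup, subgraphOfAdj_verts, Set.mem_union, Set.mem_insert_iff,
    Set.mem_singleton_iff]
  constructor
  · rintro (h | rfl | rfl)
    exacts [Or.inr h, Or.inr hx, Or.inl rfl]
  · rintro (rfl | h)
    exacts [Or.inr (Or.inr rfl), Or.inl h]

lemma subDeg_sup_subgraphOfAdj_of_ne (hadj : G.Adj x w) {u : V} (hux : u ≠ x) (huw : u ≠ w) :
    subDeg (Q ⊔ G.subgraphOfAdj hadj) u = subDeg Q u := by
  rw [subDeg, subDeg, Subgraph.neighborSet_sup, neighborSet_subgraphOfAdj_of_ne_of_ne hadj hux huw,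
    Set.union_empty]

lemma subDeg_sup_subgraphOfAdj_snd (hw : w ∉ Q.verts) (hadj : G.Adj x w) :
    subDeg (Q ⊔ G.subgraphOfAdj hadj) w = 1 := by
  have hQw : Q.neighborSet w = ∅ :=
    Set.eq_empty_of_forall_notMem fun u hu => hw (Q.edge_vert hu)
  rw [subDeg, Subgraph.neighborSet_sup, hQw, neighborSet_snd_subgraphOfAdj, Set.empty_union,
    Set.ncard_singleton]

lemma subDeg_sup_subgraphOfAdj_fst (hx : subDeg Q x = 1) (hw : w ∉ Q.verts) (hadj : G.Adj x w) :
    subDeg (Q ⊔ G.subgraphOfAdj hadj) x = 2 := by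
  obtain ⟨y, hy⟩ := Set.ncard_eq_one.mp hx
  have hyw : y ≠ w := by
    rintro rfl
    exact hw (Q.edge_vert (Q.adj_symm (hy ▸ rfl : y ∈ Q.neighborSet x)))
  rw [subDeg, Subgraph.neighborSet_sup, neighborSet_fst_subgraphOfAdj, hy, Set.singleton_union,
    Set.ncard_pair hyw]

lemma IsPathEndpoint.not_exists_verts_eq_singleton (hx : IsPathEndpoint Q x) :
    ¬ ∃ v, Q.verts = {v} := by
  rintro ⟨v, hv⟩
  obtain ⟨y, hy⟩ := Set.ncard_eq_one.mp hx.2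
  have hxy : Q.Adj x y := (hy ▸ rfl : y ∈ Q.neighborSet x)
  have hx' : x = v := Set.mem_singleton_iff.mp (hv ▸ hx.1)
  have hy' : y = v := Set.mem_singleton_iff.mp (hv ▸ Q.edge_vert hxy.symm)
  exact hxy.ne (hx'.trans hy'.symm)

lemma IsPathSubgraph.sup_subgraphOfAdj (hQ : IsPathSubgraph Q) (hx : IsPathEndpoint Q x)
    (hw : w ∉ Q.verts) (hadj : G.Adj x w) :
    IsPathSubgraph (Q ⊔ G.subgraphOfAdj hadj) ∧ IsPathEndpoint (Q ⊔ G.subgraphOfAdj hadj) w := by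
  set Q' := Q ⊔ G.subgraphOfAdj hadj
  obtain ⟨hends, hdeg⟩ := hQ.2.resolve_left hx.not_exists_verts_eq_singleton
  have hverts : Q'.verts = insert w Q.verts := verts_sup_subgraphOfAdj hx.1 hadj
  have hdegw : subDeg Q' w = 1 := subDeg_sup_subgraphOfAdj_snd hw hadj
  have hdegx : subDeg Q' x = 2 := subDeg_sup_subgraphOfAdj_fst hx.2 hw hadj
  have hdeg_ne : ∀ u, u ≠ x → u ≠ w → subDeg Q' u = subDeg Q u :=
    fun _ => subDeg_sup_subgraphOfAdj_of_ne hadj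
  have hends' : {u ∈ Q'.verts | subDeg Q' u = 1} =
      insert w ({u ∈ Q.verts | subDeg Q u = 1} \ {x}) := by
    ext u
    rw [hverts]
    by_cases huw : u = w
    · subst huw
      simp [hdegw]
    by_cases hux : u = x
    · subst hux
      simp [hdegx, huw]
    simp [hdeg_ne u hux huw, huw, hux]
  have hfin : {u ∈ Q.verts | subDeg Q u = 1}.Finite := Set.finite_of_ncard_ne_zero (by omega)
  refine ⟨⟨?_, Or.inr ⟨?_, ?_⟩⟩, hverts ▸ Set.mem_insert w _, hdegw⟩
  · exact Subgraph.connected_sup hQ.1.preconnected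
      (Subgraph.subgraphOfAdj_connected hadj).preconnected ⟨x, hx.1, Or.inl rfl⟩
  · rw [hends', Set.ncard_insert_of_notMem (fun h => hw h.1.1) hfin.sdiff,
      Set.ncard_sdiff_singleton_of_mem (show x ∈ {u ∈ Q.verts | subDeg Q u = 1} from hx), hends]
  · intro u hu
    by_cases huw : u = w
    · exact huw ▸ Or.inl hdegw
    by_cases hux : u = x
    · exact hux ▸ Or.inr hdegx
    rw [hdeg_ne u hux huw]
    exact hdeg u ((hverts ▸ hu).resolve_left huw)

lemma IsPathSubgraph.exists_extend_of_isChain (hQ : IsPathSubgraph Q) (hx : IsPathEndpoint Q x)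
    (hfin : Q.verts.Finite) {l : List V} (hl : List.IsChain G.Adj (x :: l)) (hnd : l.Nodup)
    (hfresh : ∀ w ∈ l, w ∉ Q.verts) :
    ∃ Q' : G.Subgraph, IsPathSubgraph Q' ∧ Q'.verts = Q.verts ∪ {w | w ∈ l} ∧
      Q'.verts.ncard = Q.verts.ncard + l.length := by
  induction l generalizing Q x with
  | nil => exact ⟨Q, hQ, by simp, rfl⟩
  | cons w l ih =>
    have hadj : G.Adj x w := List.isChain_cons_cons.mp hl |>.1
    have hw : w ∉ Q.verts := hfresh w List.mem_cons_self
    obtain ⟨hQ₁, hw₁⟩ := hQ.sup_subgraphOfAdj hx hw hadj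
    have hverts₁ := verts_sup_subgraphOfAdj hx.1 hadj
    obtain ⟨Q', hQ', hverts', hcard'⟩ := ih hQ₁ hw₁ (hverts₁ ▸ hfin.insert w)
      (List.isChain_cons_cons.mp hl).2 (List.nodup_cons.mp hnd).2 fun u hu => by
        rw [hverts₁, Set.mem_insert_iff, not_or]
        exact ⟨fun h => (List.nodup_cons.mp hnd).1 (h ▸ hu), hfresh u (List.mem_cons_of_mem w hu)⟩
    refine ⟨Q', hQ', ?_, ?_⟩
    · rw [hverts', hverts₁]
      ext u
      simp only [Set.mem_union, Set.mem_insert_iff, Set.mem_ofPred_eq, List.mem_cons]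
      tauto
    · rw [hcard', hverts₁, Set.ncard_insert_of_notMem hw hfin, List.length_cons]
      omega

end PathExtension

section Covers

variable {V : Type*} {G : SimpleGraph V}

lemma HasDisjointPathCover.mono {M N : ℕ} (h : HasDisjointPathCover G M) (hNM : N ≤ M) :
    HasDisjointPathCover G N :=
  let ⟨Ps, hPs, hdisj, hcard⟩ := h
  ⟨Ps, hPs, hdisj, hNM.trans hcard⟩

lemma hasDisjointPathCover_of_isPathSubgraph {P : G.Subgraph} (hP : IsPathSubgraph P)
    (h4 : 4 ≤ P.verts.ncard) {N : ℕ} (hN : N ≤ P.verts.ncard) : HasDisjointPathCover G N :=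
  ⟨{P}, by simpa using ⟨hP, h4⟩, Set.pairwise_singleton _ _, by simpa using hN⟩

lemma hasDisjointPathCover_of_disjoint_s15 {P R : G.Subgraph} (hP : IsPathSubgraph P)
    (hR : IsPathSubgraph R) (hP4 : 4 ≤ P.verts.ncard) (hR4 : 4 ≤ R.verts.ncard)
    (hPR : Disjoint P.verts R.verts) {N : ℕ} (hN : N ≤ P.verts.ncard + R.verts.ncard) :
    HasDisjointPathCover G N := by
  refine ⟨{P, R}, ?_, ?_, ?_⟩
  · rintro S (rfl | rfl)
    exacts [⟨hP, hP4⟩, ⟨hR, hR4⟩]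
  · exact Set.pairwise_pair.mpr fun _ => ⟨hPR, hPR.symm⟩
  · rw [Set.biUnion_pair, Set.ncard_union_eq hPR (Set.finite_of_ncard_ne_zero (by omega))
      (Set.finite_of_ncard_ne_zero (by omega))]
    exact hN

end Covers

namespace FivePathConfig

variable {V : Type*} {G : SimpleGraph V} (cfg : FivePathConfig G)

lemma adj_of_pathGraph_adj_s15 {a b : Fin 5} (hab : (pathGraph 5).Adj a b) :
    G.Adj (cfg.v a) (cfg.v b) := by
  have key : ∀ {a b : Fin 5}, a.val + 1 = b.val → G.Adj (cfg.v a) (cfg.v b) := fun {a b} h => by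
    have ha : (⟨a.val, by omega⟩ : Fin 4).castSucc = a := Fin.ext rfl
    have hb : (⟨a.val, by omega⟩ : Fin 4).succ = b := Fin.ext h
    have hadj := cfg.adj ⟨a.val, by omega⟩
    rwa [ha, hb] at hadj
  rcases pathGraph_adj.mp hab with h | h
  exacts [key h, (key h).symm]

lemma v_notMem_insert_U {i k : Fin 5} (hi : i ∈ cfg.A1 ∪ cfg.A2) (hki : k ≠ i) :
    cfg.v k ∉ insert (cfg.v i) (cfg.U i) := by
  rintro (h | h)
  exacts [hki (cfg.inj h), Set.disjoint_right.mp (cfg.hUv i hi) ⟨k, rfl⟩ h]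

lemma disjoint_insert_U {i j : Fin 5} (hi : i ∈ cfg.A1 ∪ cfg.A2) (hj : j ∈ cfg.A1 ∪ cfg.A2)
    (hij : i ≠ j) : Disjoint (insert (cfg.v i) (cfg.U i)) (insert (cfg.v j) (cfg.U j)) := by
  refine Set.disjoint_insert_left.mpr ⟨cfg.v_notMem_insert_U hj hij, ?_⟩
  refine Set.disjoint_insert_right.mpr ⟨fun h => ?_, cfg.hUdisj i hi j hj hij⟩
  exact Set.disjoint_left.mp (cfg.hUv i hi) h ⟨j, rfl⟩

lemma exists_extend_Q {j : Fin 5} (hj : j ∈ cfg.A1 ∪ cfg.A2) {ks : List (Fin 5)}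
    (hchain : List.IsChain (pathGraph 5).Adj (j :: ks)) (hnd : (j :: ks).Nodup) :
    ∃ Q : G.Subgraph, IsPathSubgraph Q ∧
      Q.verts ⊆ insert (cfg.v j) (cfg.U j) ∪ cfg.v '' {k | k ∈ ks} ∧
      ks.length + 3 ≤ Q.verts.ncard := by
  have hQ3 := cfg.hQcard j hj
  have hfresh : ∀ w ∈ ks.map cfg.v, w ∉ (cfg.Q j).verts := by
    simp only [List.mem_map]
    rintro _ ⟨k, hk, rfl⟩ hkQ
    exact cfg.v_notMem_insert_U hj (fun h => (List.nodup_cons.mp hnd).1 (h ▸ hk))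
      (cfg.hQverts j hj hkQ)
  obtain ⟨Q, hQ, hverts, hcard⟩ := (cfg.hQpath j hj).exists_extend_of_isChain (cfg.hQend j hj)
    (Set.finite_of_ncard_ne_zero (by omega))
    (List.isChain_map_of_isChain cfg.v (fun _ _ => cfg.adj_of_pathGraph_adj_s15) hchain)
    ((List.nodup_cons.mp hnd).2.map cfg.inj) hfresh
  refine ⟨Q, hQ, ?_, by rw [hcard, List.length_map]; omega⟩
  rw [hverts]
  refine Set.union_subset_union (cfg.hQverts j hj) ?_
  rintro _ hw
  obtain ⟨k, hk, rfl⟩ := List.mem_map.mp hw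
  exact ⟨k, hk, rfl⟩

lemma hasDisjointPathCover_of_isChain {j : Fin 5} (hj : j ∈ cfg.A1 ∪ cfg.A2) {ks : List (Fin 5)}
    (hks : ks ≠ []) (hchain : List.IsChain (pathGraph 5).Adj (j :: ks)) (hnd : (j :: ks).Nodup) :
    HasDisjointPathCover G (ks.length + 3) := by
  obtain ⟨Q, hQ, -, hcard⟩ := cfg.exists_extend_Q hj hchain hnd
  have := List.length_pos_iff.mpr hks
  exact hasDisjointPathCover_of_isPathSubgraph hQ (by omega) hcard

lemma hasDisjointPathCover_nine {i j k : Fin 5} (hi : i ∈ cfg.A2) (hj : j ∈ cfg.A1 ∪ cfg.A2)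
    (hij : i ≠ j) (hki : k ≠ i) (hjk : (pathGraph 5).Adj j k) : HasDisjointPathCover G 9 := by
  have hi' : i ∈ cfg.A1 ∪ cfg.A2 := Finset.mem_union_right _ hi
  obtain ⟨Q, hQ, hQverts, hcard⟩ := cfg.exists_extend_Q hj (List.isChain_pair.mpr hjk)
    (by simpa using hjk.ne)
  have hdisj : Disjoint Q.verts (cfg.P i).verts := by
    refine Set.disjoint_of_subset hQverts (cfg.hPverts i hi) ?_
    refine Set.disjoint_union_left.mpr ⟨cfg.disjoint_insert_U hj hi' hij.symm, ?_⟩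
    simpa using cfg.v_notMem_insert_U hi' hki
  have hQ4 : 4 ≤ Q.verts.ncard := hcard
  have hP5 := cfg.hPcard i hi
  exact hasDisjointPathCover_of_disjoint_s15 hQ (cfg.hPpath i hi) hQ4 (by omega) hdisj (by omega)

end FivePathConfig

lemma exists_pathGraph_adj_ne {i j : Fin 5} (hij : i ≠ j)
    (h : ¬ ((i = 1 ∧ j = 0) ∨ (i = 3 ∧ j = 4))) : ∃ k, k ≠ i ∧ (pathGraph 5).Adj j k := by
  simp only [pathGraph_adj]
  revert i j
  decide

theorem stmt15_general {V : Type*} (G : SimpleGraph V)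
    (cfg : FivePathConfig G) (i j : Fin 5) (hij : i ≠ j)
    (h2 : cfg.A2 = {i}) (h1 : cfg.A1 = {j}) :
    HasDisjointPathCover G 7 ∧
    (¬ ((i = 1 ∧ j = 0) ∨ (i = 3 ∧ j = 4)) → HasDisjointPathCover G 9) := by
  have hi : i ∈ cfg.A2 := h2 ▸ Finset.mem_singleton_self i
  have hj : j ∈ cfg.A1 ∪ cfg.A2 := Finset.mem_union_left _ (h1 ▸ Finset.mem_singleton_self j)
  have h9 (hgood : ¬ ((i = 1 ∧ j = 0) ∨ (i = 3 ∧ j = 4))) : HasDisjointPathCover G 9 :=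
    let ⟨_, hki, hjk⟩ := exists_pathGraph_adj_ne hij hgood
    cfg.hasDisjointPathCover_nine hi hj hij hki hjk
  refine ⟨?_, h9⟩
  by_cases hend : (i = 1 ∧ j = 0) ∨ (i = 3 ∧ j = 4)
  · rcases hend with ⟨-, rfl⟩ | ⟨-, rfl⟩
    · exact cfg.hasDisjointPathCover_of_isChain (ks := [1, 2, 3, 4]) hj (by simp)
        (by simp [pathGraph_adj]) (by decide)
    · exact cfg.hasDisjointPathCover_of_isChain (ks := [3, 2, 1, 0]) hj (by simp)
        (by simp [pathGraph_adj]) (by decide)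
  · exact (h9 hend).mono (by norm_num)

/-- a 5-path-center configuration with `A2 = {i}` and `A1 = {j}`, `i ≠ j`,
yields vertex-disjoint `4⁺`-paths covering at least 7 vertices, and at least 9 whenever
`(i, j) ∉ {(2,1), (4,5)}` (with indices, `(i, j) ∉ {(1,0), (3,4)}`). -/
theorem stmt15 {V : Type*} [Fintype V] [DecidableEq V] (G : SimpleGraph V)
    (cfg : FivePathConfig G) (i j : Fin 5) (hij : i ≠ j)
    (h2 : cfg.A2 = {i}) (h1 : cfg.A1 = {j}) :
    HasDisjointPathCover G 7 ∧
    (¬ ((i = 1 ∧ j = 0) ∨ (i = 3 ∧ j = 4)) → HasDisjointPathCover G 9) :=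
  stmt15_general G cfg i j hij h2 h1
end
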